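/- For every w ≥ 1 there exist an n and a permutation π of {1,…,n} of bandwidth w such that π cannot be written as a product of fewer than 2w − 1 permutations of bandwidth 1; that is, the bound 2w − 1 in Strang's conjecture is exact. -/

import Mathlib

/-!
Take for `π` the swap of the blocks `[0, w)` and `[w, 2w)`, and follow the `w` tokens that
start in the left block. The quantity "number of these tokens at positions `≥ w`" plus "number
at positions `≥ w + 1`" is `0` for the identity and `w + (w - 1)` for `π`. A bandwidth-1
permutation moves at most one token rightwards across any cut, and it cannot do so across two
adjacent cuts, since `p ↦ p + 1` forces `p + 1 ↦ p`. So each factor raises the quantity by at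
most one.
-/

open Finset

theorem List.apply_prod_le_add_length {M : Type*} [Monoid M] {P : M → Prop} (Φ : M → ℕ)
    (hΦ : ∀ τ σ, P τ → Φ (τ * σ) ≤ Φ σ + 1) {l : List M} (hl : ∀ τ ∈ l, P τ) :
    Φ l.prod ≤ Φ 1 + l.length := by
  induction l with
  | nil => simp
  | cons τ l ih =>
    rw [List.forall_mem_cons] at hl
    rw [List.prod_cons, List.length_cons]
    have := hΦ τ l.prod hl.1
    have := ih hl.2
    omega

namespace Equiv.Perm

variable {n : ℕ}

def HasBandwidth (w : ℕ) (σ : Perm (Fin n)) : Prop :=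
  ∀ i : Fin n, |((σ i : ℕ) : ℤ) - ((i : ℕ) : ℤ)| ≤ (w : ℤ)

/-- The cut `c` lies between positions `c - 1` and `c`. -/
def MovesRightAcross (c : ℕ) (τ : Perm (Fin n)) : Prop :=
  ∃ p : Fin n, (p : ℕ) + 1 = c ∧ (τ p : ℕ) = c

def countAtLeast (s : Finset (Fin n)) (c : ℕ) (σ : Perm (Fin n)) : ℕ :=
  #{i ∈ s | c ≤ (σ i : ℕ)}

namespace HasBandwidth

variable {w : ℕ} {τ : Perm (Fin n)}

lemma val_le (hτ : τ.HasBandwidth w) (i : Fin n) :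
    (τ i : ℕ) ≤ i + w ∧ (i : ℕ) ≤ τ i + w := by
  have := abs_le.mp (hτ i)
  omega

/-- Pigeonhole: otherwise `τ⁻¹` would map `Iic a` injectively into `Iio a`. -/
lemma apply_eq_of_apply_eq_succ (hτ : τ.HasBandwidth 1) {a b : Fin n}
    (hab : (b : ℕ) = a + 1) (ha : τ a = b) : τ b = a := by
  have hb := hτ.val_le b
  suffices (τ b : ℕ) ≤ a from Fin.ext (by omega)
  by_contra! hlt
  have hpre : ∀ i : Fin n, (τ i : ℕ) ≤ a → (i : ℕ) < a := by
    intro i hi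
    have := hτ.val_le i
    rcases (by omega : (i : ℕ) < a ∨ (i : ℕ) = a ∨ (i : ℕ) = b) with h | h | h
    · exact h
    · rw [show i = a from Fin.ext h, ha] at hi; omega
    · rw [show i = b from Fin.ext h] at hi; omega
  have hmaps : Set.MapsTo τ.symm (Iic a) (Iio a) := fun j hj => by
    rw [mem_coe, mem_Iic, Fin.le_def] at hj
    rw [mem_coe, mem_Iio, Fin.lt_def]
    exact hpre _ (by rwa [apply_symm_apply])
  have := card_le_card_of_injOn _ hmaps τ.symm.injective.injOn
  rw [Fin.card_Iic, Fin.card_Iio] at this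
  omega

lemma not_movesRightAcross_succ (hτ : τ.HasBandwidth 1) {c : ℕ}
    (hc : τ.MovesRightAcross c) : ¬ τ.MovesRightAcross (c + 1) := by
  rintro ⟨q, hq, hτq⟩
  obtain ⟨p, hp, hτp⟩ := hc
  have := hτ.apply_eq_of_apply_eq_succ (b := q) (by omega) (Fin.ext (by omega : (τ p : ℕ) = q))
  omega

lemma val_add_one_eq_and_val_apply_eq_of_lt_of_le (hτ : τ.HasBandwidth 1) {c : ℕ} {x : Fin n}
    (hx : (x : ℕ) < c) (hτx : c ≤ (τ x : ℕ)) : (x : ℕ) + 1 = c ∧ (τ x : ℕ) = c := by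
  have := hτ.val_le x
  omega

end HasBandwidth

section countAtLeast

variable {s : Finset (Fin n)} {c : ℕ} {τ σ : Perm (Fin n)}

lemma countAtLeast_one (hs : ∀ i ∈ s, (i : ℕ) < c) : countAtLeast s c 1 = 0 := by
  rw [countAtLeast, card_eq_zero, filter_eq_empty_iff]
  simpa using hs

lemma countAtLeast_mul_le (hτ : τ.HasBandwidth 1) (hc : ¬ τ.MovesRightAcross c) :
    countAtLeast s c (τ * σ) ≤ countAtLeast s c σ := by
  refine card_le_card (monotone_filter_right s fun i _ hi => not_lt.mp fun hlt => hc ⟨σ i, ?_⟩)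
  exact hτ.val_add_one_eq_and_val_apply_eq_of_lt_of_le hlt hi

lemma countAtLeast_mul_le_add_one (hτ : τ.HasBandwidth 1) :
    countAtLeast s c (τ * σ) ≤ countAtLeast s c σ + 1 := by
  by_cases hc : τ.MovesRightAcross c
  · obtain ⟨p, hp, hτp⟩ := hc
    unfold countAtLeast
    calc _ ≤ #(insert (σ.symm p) {i ∈ s | c ≤ (σ i : ℕ)}) := by
          refine card_le_card (subset_iff.mpr fun i hi => ?_)
          rw [Finset.mem_filter, mul_apply] at hi
          rw [mem_insert, Finset.mem_filter, eq_symm_apply]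
          by_contra! h
          have := hτ.val_add_one_eq_and_val_apply_eq_of_lt_of_le (h.2 hi.1) hi.2
          exact h.1 (Fin.ext (by omega))
      _ ≤ _ := card_insert_le _ _
  · exact (countAtLeast_mul_le hτ hc).trans (Nat.le_succ _)

lemma countAtLeast_add_countAtLeast_succ_mul_le (hτ : τ.HasBandwidth 1) :
    countAtLeast s c (τ * σ) + countAtLeast s (c + 1) (τ * σ) ≤
      countAtLeast s c σ + countAtLeast s (c + 1) σ + 1 := by
  by_cases hc : τ.MovesRightAcross c
  · have := countAtLeast_mul_le_add_one (s := s) (σ := σ) hτ (c := c)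
    have := countAtLeast_mul_le (s := s) (σ := σ) hτ (hτ.not_movesRightAcross_succ hc)
    omega
  · have := countAtLeast_mul_le (s := s) (σ := σ) hτ hc
    have := countAtLeast_mul_le_add_one (s := s) (σ := σ) hτ (c := c + 1)
    omega

end countAtLeast

end Equiv.Perm

section finAddFlip

variable {m n : ℕ} {i : Fin (m + n)}

lemma val_finAddFlip_of_lt (h : (i : ℕ) < m) : (finAddFlip i : ℕ) = n + i := by
  simp [finAddFlip_apply_mk_left h]

lemma val_finAddFlip_of_le (h : m ≤ (i : ℕ)) : (finAddFlip i : ℕ) = i - m := by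
  simp [finAddFlip_apply_mk_right h i.isLt]

end finAddFlip

open Equiv Equiv.Perm

lemma hasBandwidth_finAddFlip (w : ℕ) : HasBandwidth w (finAddFlip : Perm (Fin (w + w))) := by
  intro i
  rw [abs_le]
  rcases lt_or_ge (i : ℕ) w with h | h
  · rw [val_finAddFlip_of_lt h]; omega
  · rw [val_finAddFlip_of_le h]; have := i.isLt; omega

lemma countAtLeast_finAddFlip (w : ℕ) :
    countAtLeast {i | (i : ℕ) < w} w (finAddFlip : Perm (Fin (w + w))) = w := by
  rw [countAtLeast, filter_true_of_mem, Fin.card_filter_val_lt, min_eq_right (by omega)]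
  intro i hi
  rw [mem_filter_univ] at hi
  rw [val_finAddFlip_of_lt hi]
  omega

/-- Only the token sent to position `w` fails to reach `w + 1`. -/
lemma sub_one_le_countAtLeast_succ_finAddFlip (w : ℕ) :
    w - 1 ≤ countAtLeast {i | (i : ℕ) < w} (w + 1) (finAddFlip : Perm (Fin (w + w))) := by
  set s : Finset (Fin (w + w)) := {i | (i : ℕ) < w}
  have hs : #s = w := by rw [Fin.card_filter_val_lt, min_eq_right (by omega)]
  have hrest : #{i ∈ s | ¬ w + 1 ≤ (finAddFlip i : ℕ)} ≤ 1 := by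
    refine card_le_one.mpr fun a ha b hb => ?_
    rw [Finset.mem_filter, mem_filter_univ] at ha hb
    rw [val_finAddFlip_of_lt ha.1] at ha
    rw [val_finAddFlip_of_lt hb.1] at hb
    exact Fin.ext (by omega)
  have := card_filter_add_card_filter_not (s := s) (fun i => w + 1 ≤ (finAddFlip i : ℕ))
  rw [countAtLeast]
  omega

theorem strang_bound_exact_general (w : ℕ) :
    ∃ (n : ℕ) (π : Equiv.Perm (Fin n)),
      (∀ i : Fin n, |((π i : ℕ) : ℤ) - ((i : ℕ) : ℤ)| ≤ (w : ℤ)) ∧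
      ∀ (k : ℕ) (ρ : Fin k → Equiv.Perm (Fin n)),
        (∀ j, ∀ i : Fin n, |(((ρ j) i : ℕ) : ℤ) - ((i : ℕ) : ℤ)| ≤ 1) →
        π = (List.ofFn ρ).prod → 2 * w - 1 ≤ k := by
  refine ⟨w + w, finAddFlip, hasBandwidth_finAddFlip w, fun k ρ hρ hπ => ?_⟩
  have hcut := countAtLeast_finAddFlip w
  have hcut_succ := sub_one_le_countAtLeast_succ_finAddFlip w
  set s : Finset (Fin (w + w)) := {i | (i : ℕ) < w}
  have hsteps : ∀ τ ∈ List.ofFn ρ, τ.HasBandwidth 1 := by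
    simpa [List.forall_mem_ofFn_iff, HasBandwidth] using hρ
  have hbound := List.apply_prod_le_add_length
    (fun σ => countAtLeast s w σ + countAtLeast s (w + 1) σ)
    (fun _ _ hτ => countAtLeast_add_countAtLeast_succ_mul_le hτ) hsteps
  have hs : ∀ c, w ≤ c → ∀ i ∈ s, (i : ℕ) < c := fun c hc i hi =>
    ((mem_filter_univ i).mp hi).trans_le hc
  rw [← hπ, List.length_ofFn, countAtLeast_one (hs w le_rfl),
    countAtLeast_one (hs (w + 1) (Nat.le_succ w))] at hbound
  omega

/-- the bound `2w − 1` in Strang's conjecture is exact: for every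
`w ≥ 1` there are `n` and a bandwidth-`w` permutation of `{1,…,n}` that is not
a product of fewer than `2w − 1` permutations of bandwidth 1. -/
theorem strang_bound_exact (w : ℕ) (hw : 1 ≤ w) :
    ∃ (n : ℕ) (π : Equiv.Perm (Fin n)),
      (∀ i : Fin n, |((π i : ℕ) : ℤ) - ((i : ℕ) : ℤ)| ≤ (w : ℤ)) ∧
      ∀ (k : ℕ) (ρ : Fin k → Equiv.Perm (Fin n)),
        (∀ j, ∀ i : Fin n, |(((ρ j) i : ℕ) : ℤ) - ((i : ℕ) : ℤ)| ≤ 1) →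
        π = (List.ofFn ρ).prod → 2 * w - 1 ≤ k :=
  strang_bound_exact_general w
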